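/- For any set W, any binary relation R on W, and any subset A ⊆ W, the diamond induction axiom of PDL for the transitive closure is valid: ⟨R⁺⟩A ⊆ ⟨R⟩A ∪ ⟨R⁺⟩(Aᶜ ∩ ⟨R⟩A), where Aᶜ denotes the complement of A in W. -/
import Mathlib

theorem diamond_induction_axiom {W : Type*} (R : W → W → Prop) (A : Set W) :
    {w | ∃ v, Relation.TransGen R w v ∧ v ∈ A} ⊆
      {w | ∃ v, R w v ∧ v ∈ A} ∪
      {w | ∃ v, Relation.TransGen R w v ∧
        v ∈ Aᶜ ∩ {x | ∃ u, R x u ∧ u ∈ A}} := by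
  rintro w ⟨v, h, hv⟩
  revert hv
  induction h with
  | single hr => exact fun hv => Or.inl ⟨_, hr, hv⟩
  | @tail u v' htg hr ih =>
    intro hv
    by_cases hu : u ∈ A
    · exact ih hu
    · exact Or.inr ⟨u, htg, hu, v', hr, hv⟩
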